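/- arXiv:2301.02751 — 2 statements merged into one kernel-verified Lean document; each statement's English description precedes it below -/
import Mathlib

section
/- Let {X0, X1, X2, X3} be a difference family in Z/v with parameters (v; k0, k1, k2, k3; λ) satisfying λ = k0 + k1 + k2 + k3 − v. Let A_i be the v×v circulant ±1 matrices whose first row has entry −1 at positions in X_i and +1 elsewhere. Then A0·A0ᵀ + A1·A1ᵀ + A2·A2ᵀ + A3·A3ᵀ = 4v·I. -/
/-!
Writing each ±1 entry as `1 - 2·[t - i ∈ X]`, the `(i, j)` entry of `A Aᵀ` equals
`v - 4|X| + 4 · #{t | t - i ∈ X, t - j ∈ X}`, and the last count is the number of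
representations of `j - i` as a difference of two elements of `X`. Summed over the
four sets, the diagonal gives `4v`, while off the diagonal the difference-family
condition and `λ = Σ kᵢ - v` make the entry vanish.
-/

open Matrix

def diffCount {v : ℕ} (X : Finset (ZMod v)) (d : ZMod v) : ℕ :=
  ((X ×ˢ X).filter fun p => p.1 - p.2 = d).card

def circOf {v : ℕ} (X : Finset (ZMod v)) : Matrix (ZMod v) (ZMod v) ℝ :=
  fun i j => if j - i ∈ X then -1 else 1

lemma card_filter_sub_mem {G : Type*} [AddCommGroup G] [Fintype G] [DecidableEq G]
    (X : Finset G) (i : G) :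
    (Finset.univ.filter fun t => t - i ∈ X).card = X.card := by
  have hshift : (Finset.univ.filter fun t => t - i ∈ X) = X.image (· + i) := by
    ext t
    simp only [Finset.mem_filter, Finset.mem_univ, true_and, Finset.mem_image]
    exact ⟨fun h => ⟨t - i, h, sub_add_cancel t i⟩, by rintro ⟨x, hx, rfl⟩; simpa using hx⟩
  rw [hshift, Finset.card_image_of_injective _ (add_left_injective i)]

lemma diffCount_zero {v : ℕ} (X : Finset (ZMod v)) : diffCount X 0 = X.card := by
  have hdiag : ((X ×ˢ X).filter fun p => p.1 - p.2 = 0) = X.diag := by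
    ext ⟨a, b⟩
    simp only [Finset.mem_filter, Finset.mem_product, Finset.mem_diag, sub_eq_zero]
    constructor
    · rintro ⟨⟨ha, -⟩, rfl⟩; exact ⟨ha, rfl⟩
    · rintro ⟨ha, rfl⟩; exact ⟨⟨ha, ha⟩, rfl⟩
  rw [diffCount, hdiag, Finset.diag_card]

lemma card_filter_sub_mem_and_sub_mem {v : ℕ} [NeZero v] (X : Finset (ZMod v)) (i j : ZMod v) :
    (Finset.univ.filter fun t => t - i ∈ X ∧ t - j ∈ X).card = diffCount X (j - i) := by
  refine Finset.card_bij' (fun t _ => (t - i, t - j)) (fun p _ => p.1 + i) ?_ ?_ ?_ ?_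
  · intro t ht
    simp only [Finset.mem_filter, Finset.mem_univ, true_and] at ht
    simp only [Finset.mem_filter, Finset.mem_product]
    exact ⟨ht, by ring⟩
  · rintro ⟨a, b⟩ hp
    simp only [Finset.mem_filter, Finset.mem_product] at hp
    obtain ⟨⟨ha, hb⟩, hab⟩ := hp
    have hb' : a + i - j = b := by linear_combination hab
    simp only [Finset.mem_filter, Finset.mem_univ, true_and, add_sub_cancel_right, hb']
    exact ⟨ha, hb⟩
  · intro t _
    exact sub_add_cancel t i
  · rintro ⟨a, b⟩ hp
    simp only [Finset.mem_filter, Finset.mem_product] at hp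
    ext
    · exact add_sub_cancel_right a i
    · show a + i - j = b
      linear_combination hp.2

lemma circOf_mul_transpose_apply {v : ℕ} [NeZero v] (X : Finset (ZMod v)) (i j : ZMod v) :
    (circOf X * (circOf X)ᵀ) i j = v - 4 * X.card + 4 * diffCount X (j - i) := by
  have hterm : ∀ t, circOf X i t * (circOf X)ᵀ t j =
      1 - 2 * (if t - i ∈ X then 1 else 0) - 2 * (if t - j ∈ X then 1 else 0)
        + 4 * (if t - i ∈ X ∧ t - j ∈ X then 1 else 0) := by
    intro t
    simp only [transpose_apply, circOf]
    by_cases hi : t - i ∈ X <;> by_cases hj : t - j ∈ X <;> norm_num [hi, hj]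
  rw [mul_apply, Finset.sum_congr rfl fun t _ => hterm t, Finset.sum_add_distrib,
    Finset.sum_sub_distrib, Finset.sum_sub_distrib, ← Finset.mul_sum, ← Finset.mul_sum,
    ← Finset.mul_sum, Finset.sum_boole, Finset.sum_boole, Finset.sum_boole,
    card_filter_sub_mem, card_filter_sub_mem, card_filter_sub_mem_and_sub_mem]
  simp only [Finset.sum_const, Finset.card_univ, ZMod.card, nsmul_eq_mul, mul_one]
  ring

theorem stmt7 {v k0 k1 k2 k3 lam : ℕ} [NeZero v]
    (X0 X1 X2 X3 : Finset (ZMod v))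
    (h0 : X0.card = k0) (h1 : X1.card = k1) (h2 : X2.card = k2) (h3 : X3.card = k3)
    (hA : ∀ d : ZMod v, d ≠ 0 →
      diffCount X0 d + diffCount X1 d + diffCount X2 d + diffCount X3 d = lam)
    (hlam : (lam : ℤ) = (k0 : ℤ) + k1 + k2 + k3 - v) :
    circOf X0 * (circOf X0)ᵀ + circOf X1 * (circOf X1)ᵀ +
      circOf X2 * (circOf X2)ᵀ + circOf X3 * (circOf X3)ᵀ =
      ((4 * v : ℝ)) • (1 : Matrix (ZMod v) (ZMod v) ℝ) := by
  ext i j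
  simp only [Matrix.add_apply, Matrix.smul_apply, one_apply, smul_eq_mul,
    circOf_mul_transpose_apply]
  by_cases hij : i = j
  · subst hij
    simp only [sub_self, diffCount_zero, if_true]
    ring
  · have hcount := hA (j - i) (sub_ne_zero.mpr (Ne.symm hij))
    have hcountR : (diffCount X0 (j - i) : ℝ) + diffCount X1 (j - i)
        + diffCount X2 (j - i) + diffCount X3 (j - i) = lam := by exact_mod_cast hcount
    have hlamR : (lam : ℝ) = k0 + k1 + k2 + k3 - v := by exact_mod_cast hlam
    rw [if_neg hij, h0, h1, h2, h3]
    linear_combination 4 * hcountR + 4 * hlamR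
end

section
/- Let A0, A1, A2, A3 be v×v circulant matrices with A1 = A2, A0 symmetric, A3 symmetric, and let R be the v×v back-diagonal identity matrix. Then the propus array P = [[−A0, A1R, A2R, A3R], [A2R, RA3, A0, −RA1], [A1R, A0, −RA3, RA2], [A3R, −RA2, RA1, A0]] is a symmetric matrix. -/
/-!
For a circulant `B` with symbol `b`, the entries `(B R) i j = b (-j - i)` and `(R B) i j = b (j + i)`
depend only on `i + j`, so `B R` and `R B` are symmetric. A block matrix is symmetric iff its
`(j, i)` block is the transpose of its `(i, j)` block; once `A1 = A2`, every block of the propus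
array is `±A0` or `±` one of `A2 R`, `R A2`, `A3 R`, `R A3`, and each such pair matches.
-/

open Matrix

def backDiag (v : ℕ) [NeZero v] : Matrix (ZMod v) (ZMod v) ℝ :=
  fun i j => if i + j = 0 then 1 else 0

def IsCirculant {v : ℕ} (A : Matrix (ZMod v) (ZMod v) ℝ) : Prop :=
  ∃ a : ZMod v → ℝ, ∀ i j, A i j = a (j - i)

def propus {v : ℕ} [NeZero v] (A0 A1 A2 A3 : Matrix (ZMod v) (ZMod v) ℝ) :
    Matrix (Fin 4 × ZMod v) (Fin 4 × ZMod v) ℝ :=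
  fun p q =>
    (!![-A0, A1 * backDiag v, A2 * backDiag v, A3 * backDiag v;
        A2 * backDiag v, backDiag v * A3, A0, -(backDiag v * A1);
        A1 * backDiag v, A0, -(backDiag v * A3), backDiag v * A2;
        A3 * backDiag v, -(backDiag v * A2), backDiag v * A1, A0]) p.1 q.1 p.2 q.2

section

variable {v : ℕ} [NeZero v]

theorem mul_backDiag_apply (B : Matrix (ZMod v) (ZMod v) ℝ) (i j : ZMod v) :
    (B * backDiag v) i j = B i (-j) := by
  simp [mul_apply, backDiag, add_eq_zero_iff_eq_neg]

theorem backDiag_mul_apply (B : Matrix (ZMod v) (ZMod v) ℝ) (i j : ZMod v) :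
    (backDiag v * B) i j = B (-i) j := by
  simp [mul_apply, backDiag, add_eq_zero_iff_eq_neg']

theorem IsCirculant.isSymm_mul_backDiag {B : Matrix (ZMod v) (ZMod v) ℝ} (hB : IsCirculant B) :
    (B * backDiag v).IsSymm := by
  obtain ⟨b, hb⟩ := hB
  refine IsSymm.ext fun i j => ?_
  rw [mul_backDiag_apply, mul_backDiag_apply, hb, hb]
  ring_nf

theorem IsCirculant.isSymm_backDiag_mul {B : Matrix (ZMod v) (ZMod v) ℝ} (hB : IsCirculant B) :
    (backDiag v * B).IsSymm := by
  obtain ⟨b, hb⟩ := hB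
  refine IsSymm.ext fun i j => ?_
  rw [backDiag_mul_apply, backDiag_mul_apply, hb, hb]
  ring_nf

theorem propus_eq_comp (A0 A1 A2 A3 : Matrix (ZMod v) (ZMod v) ℝ) :
    propus A0 A1 A2 A3 = comp (Fin 4) (Fin 4) (ZMod v) (ZMod v) ℝ
      !![-A0, A1 * backDiag v, A2 * backDiag v, A3 * backDiag v;
        A2 * backDiag v, backDiag v * A3, A0, -(backDiag v * A1);
        A1 * backDiag v, A0, -(backDiag v * A3), backDiag v * A2;
        A3 * backDiag v, -(backDiag v * A2), backDiag v * A1, A0] :=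
  rfl

end

theorem stmt16_general {v : ℕ} [NeZero v]
    (A0 A1 A2 A3 : Matrix (ZMod v) (ZMod v) ℝ)
    (hc2 : IsCirculant A2) (hc3 : IsCirculant A3)
    (h12 : A1 = A2) (h0s : A0ᵀ = A0) :
    (propus A0 A1 A2 A3)ᵀ = propus A0 A1 A2 A3 := by
  subst h12
  rw [← IsSymm, propus_eq_comp, isSymm_comp_iff]
  ext i j : 1
  fin_cases i <;> fin_cases j <;>
    simp [h0s, hc2.isSymm_mul_backDiag.eq, hc2.isSymm_backDiag_mul.eq,
      hc3.isSymm_mul_backDiag.eq, hc3.isSymm_backDiag_mul.eq]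

theorem stmt16 {v : ℕ} [NeZero v]
    (A0 A1 A2 A3 : Matrix (ZMod v) (ZMod v) ℝ)
    (hc0 : IsCirculant A0) (hc1 : IsCirculant A1)
    (hc2 : IsCirculant A2) (hc3 : IsCirculant A3)
    (h12 : A1 = A2) (h0s : A0ᵀ = A0) (h3s : A3ᵀ = A3) :
    (propus A0 A1 A2 A3)ᵀ = propus A0 A1 A2 A3 :=
  stmt16_general A0 A1 A2 A3 hc2 hc3 h12 h0s
end
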